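/- Let B be a real symmetric positive definite n×n matrix with largest eigenvalue λ_max(B), and let Λ = diag(μ₁,...,μₙ) with 0 < μᵢ < 2/λ_max(B) for all i. Then every eigenvalue λ of ΛB satisfies 0 < λ < 2, and consequently the spectral radius of I − ΛB is strictly less than 1. -/

import Mathlib

/-!
For an eigenpair `Λ B v = λ v` put `w = B v`. Since `B` is symmetric, `⟪w, Λ w⟫ = λ ⟪v, B v⟫`, so
`λ` is a quotient of two positive reals. Moreover `Λ < (2 / λ_max) • 1` and `B² ≤ λ_max • B` in the
Loewner order, whence `⟪w, Λ w⟫ < (2 / λ_max) ‖w‖² ≤ 2 ⟪v, B v⟫`, i.e. `λ < 2`. The eigenvalues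
`η = 1 - λ` of `I - Λ B` then lie in `(-1, 1)`.
-/

open Matrix
open scoped ComplexOrder MatrixOrder Matrix.Norms.L2Operator

namespace Matrix

variable {n 𝕜 : Type*} [Fintype n] [RCLike 𝕜]

lemma PosSemidef.map_ofReal [DecidableEq n] {M : Matrix n n ℝ} (hM : M.PosSemidef) :
    (M.map (algebraMap ℝ 𝕜)).PosSemidef := by
  obtain ⟨N, rfl⟩ := CStarAlgebra.nonneg_iff_eq_star_mul_self.mp hM.nonneg
  rw [Matrix.map_mul, star_eq_conjTranspose, conjTranspose_map _ (fun _ => by simp)]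
  exact posSemidef_conjTranspose_mul_self _

lemma PosDef.map_ofReal [DecidableEq n] {M : Matrix n n ℝ} (hM : M.PosDef) :
    (M.map (algebraMap ℝ 𝕜)).PosDef :=
  hM.posSemidef.map_ofReal.posDef_iff_isUnit.mpr (hM.isUnit.map (algebraMap ℝ 𝕜).mapMatrix)

lemma PosSemidef.smul_sub_mul_self [DecidableEq n] {A : Matrix n n 𝕜} (hA : A.PosSemidef)
    {c : ℝ} (hc : ∀ i, hA.1.eigenvalues i ≤ c) : (c • A - A * A).PosSemidef := by
  rw [RCLike.real_smul_eq_coe_smul (K := 𝕜), hA.1.spectral_theorem, ← map_mul, ← map_smul,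
    ← map_sub, Unitary.conjStarAlgAut_apply, Unitary.isUnit_coe.posSemidef_star_right_conjugate_iff,
    diagonal_mul_diagonal, ← diagonal_smul, diagonal_sub, posSemidef_diagonal_iff]
  intro i
  simp only [Pi.smul_apply, Function.comp_apply, smul_eq_mul, sub_nonneg, ← RCLike.ofReal_mul,
    RCLike.ofReal_le_ofReal]
  exact mul_le_mul_of_nonneg_right (hc i) (hA.eigenvalues_nonneg i)

variable {D B : Matrix n n 𝕜} {v : n → 𝕜} {l : 𝕜}

lemma IsHermitian.star_mulVec_dotProduct (hB : B.IsHermitian) (v w : n → 𝕜) :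
    star (B *ᵥ v) ⬝ᵥ w = star v ⬝ᵥ B *ᵥ w := by
  rw [star_mulVec, hB.eq, dotProduct_mulVec]

lemma IsHermitian.eigenvalue_mul_dotProduct (hB : B.IsHermitian) (h : (D * B) *ᵥ v = l • v) :
    l * (star v ⬝ᵥ B *ᵥ v) = star (B *ᵥ v) ⬝ᵥ D *ᵥ (B *ᵥ v) := by
  rw [mulVec_mulVec, h, dotProduct_smul, smul_eq_mul, hB.star_mulVec_dotProduct]

lemma PosDef.mulVec_ne_zero (hB : B.PosDef) (hv : v ≠ 0) : B *ᵥ v ≠ 0 := fun h0 => by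
  simpa [h0] using hB.dotProduct_mulVec_pos hv

lemma PosDef.eigenvalue_mul_pos (hD : D.PosDef) (hB : B.PosDef) (hv : v ≠ 0)
    (h : (D * B) *ᵥ v = l • v) : 0 < l := by
  have hDw := hD.dotProduct_mulVec_pos (hB.mulVec_ne_zero hv)
  rw [← hB.1.eigenvalue_mul_dotProduct h] at hDw
  exact pos_of_mul_pos_left hDw (hB.dotProduct_mulVec_pos hv).le

lemma PosDef.eigenvalue_mul_lt [DecidableEq n] (hB : B.PosDef) {c β : ℝ} (hc : 0 ≤ c)
    (hcD : (c • 1 - D).PosDef) (hβB : (β • B - B * B).PosSemidef) (hv : v ≠ 0)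
    (h : (D * B) *ᵥ v = l • v) : l < ↑(c * β) := by
  set w := B *ᵥ v
  have hb := hB.dotProduct_mulVec_pos hv
  have hDw : star w ⬝ᵥ D *ᵥ w < c * (star w ⬝ᵥ w) := by
    simpa only [sub_mulVec, dotProduct_sub, smul_mulVec, one_mulVec, dotProduct_smul,
      RCLike.real_smul_eq_coe_mul, sub_pos] using hcD.dotProduct_mulVec_pos (hB.mulVec_ne_zero hv)
  have hww : star w ⬝ᵥ w ≤ β * (star v ⬝ᵥ B *ᵥ v) := by
    have := hβB.dotProduct_mulVec_nonneg v
    rw [sub_mulVec, dotProduct_sub, ← mulVec_mulVec, ← hB.1.star_mulVec_dotProduct] at this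
    simpa [smul_mulVec, RCLike.real_smul_eq_coe_mul] using this
  refine lt_of_mul_lt_mul_right ?_ hb.le
  calc l * (star v ⬝ᵥ B *ᵥ v) = star w ⬝ᵥ D *ᵥ w := hB.1.eigenvalue_mul_dotProduct h
    _ < c * (star w ⬝ᵥ w) := hDw
    _ ≤ c * (β * (star v ⬝ᵥ B *ᵥ v)) := by gcongr
    _ = ↑(c * β) * (star v ⬝ᵥ B *ᵥ v) := by push_cast; ring

theorem exists_ofReal_eigenvalue_diagonal_mul [DecidableEq n] {B : Matrix n n ℝ} (hB : B.PosDef)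
    {μ : n → ℝ} (hμ : ∀ i, 0 < μ i ∧ μ i < 2 / ⨆ j, hB.isHermitian.eigenvalues j)
    (hv : v ≠ 0) (h : ((diagonal μ).map (algebraMap ℝ 𝕜) * B.map (algebraMap ℝ 𝕜)) *ᵥ v = l • v) :
    ∃ r : ℝ, l = r ∧ 0 < r ∧ r < 2 := by
  set lmax := ⨆ j, hB.isHermitian.eigenvalues j
  let φ : Matrix n n ℝ →ₐ[ℝ] Matrix n n 𝕜 := (Algebra.ofId ℝ 𝕜).mapMatrix
  obtain ⟨i, -⟩ := Function.ne_iff.mp hv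
  have hc : 0 < 2 / lmax := (hμ i).1.trans (hμ i).2
  -- `2 / 0 = 0`, so the hypothesis on `μ i` rules out `lmax = 0`
  have hlmax : lmax ≠ 0 := fun h0 => by simp [h0] at hc
  have hD : (diagonal μ).PosDef := posDef_diagonal_iff.mpr fun i => (hμ i).1
  have hcD : ((2 / lmax) • 1 - diagonal μ).PosDef := by
    rw [smul_one_eq_diagonal, diagonal_sub, posDef_diagonal_iff]
    exact fun i => sub_pos.mpr (hμ i).2
  have hβB : (lmax • B - B * B).PosSemidef :=
    hB.posSemidef.smul_sub_mul_self (le_ciSup (Set.finite_range _).bddAbove)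
  have hcDc : ((2 / lmax) • 1 - φ (diagonal μ)).PosDef := by
    have h : (φ _).PosDef := hcD.map_ofReal
    rwa [map_sub, map_smul, map_one] at h
  have hβBc : (lmax • φ B - φ B * φ B).PosSemidef := by
    have h : (φ _).PosSemidef := hβB.map_ofReal
    rwa [map_sub, map_smul, map_mul] at h
  obtain ⟨r, hr, rfl⟩ := RCLike.pos_iff_exists_ofReal.mp
    (hD.map_ofReal.eigenvalue_mul_pos hB.map_ofReal hv h)
  have hr2 := hB.map_ofReal.eigenvalue_mul_lt hc.le hcDc hβBc hv h
  rw [div_mul_cancel₀ _ hlmax] at hr2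
  exact ⟨r, rfl, hr, mod_cast hr2⟩

end Matrix

theorem stmt6_general {n : ℕ} (B : Matrix (Fin n) (Fin n) ℝ) (hB : B.PosDef)
    (μ : Fin n → ℝ)
    (hμ : ∀ i, 0 < μ i ∧ μ i < 2 / (⨆ j, hB.isHermitian.eigenvalues j)) :
    (∀ (lam : ℂ) (v : Fin n → ℂ), v ≠ 0 →
      ((Matrix.diagonal μ * B).map (Complex.ofReal ·)).mulVec v = lam • v →
      lam.im = 0 ∧ 0 < lam.re ∧ lam.re < 2) ∧
    (∀ (η : ℂ) (v : Fin n → ℂ), v ≠ 0 →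
      ((1 - Matrix.diagonal μ * B).map (Complex.ofReal ·)).mulVec v = η • v →
      ‖η‖ < 1) := by
  have hmap (M : Matrix (Fin n) (Fin n) ℝ) :
      M.map (Complex.ofReal ·) = (algebraMap ℝ ℂ).mapMatrix M := rfl
  refine ⟨fun lam v hv h => ?_, fun η v hv h => ?_⟩
  · rw [hmap, map_mul] at h
    obtain ⟨r, rfl, hr0, hr2⟩ := exists_ofReal_eigenvalue_diagonal_mul hB hμ hv h
    exact ⟨Complex.ofReal_im r, hr0, hr2⟩
  · rw [hmap, map_sub, map_one, map_mul, sub_mulVec, one_mulVec, sub_eq_iff_eq_add] at h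
    obtain ⟨r, hr, hr0, hr2⟩ := exists_ofReal_eigenvalue_diagonal_mul (l := 1 - η) hB hμ hv
      (by rw [sub_smul, one_smul]; exact eq_sub_of_add_eq' h.symm)
    have hη : η = ↑(1 - r) := by push_cast; linear_combination -hr
    rw [hη, Complex.norm_real, Real.norm_eq_abs, abs_lt]
    constructor <;> linarith

theorem stmt6 {n : ℕ} (hn : 0 < n) (B : Matrix (Fin n) (Fin n) ℝ) (hB : B.PosDef)
    (μ : Fin n → ℝ)
    (hμ : ∀ i, 0 < μ i ∧ μ i < 2 / (⨆ j, hB.isHermitian.eigenvalues j)) :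
    (∀ (lam : ℂ) (v : Fin n → ℂ), v ≠ 0 →
      ((Matrix.diagonal μ * B).map (Complex.ofReal ·)).mulVec v = lam • v →
      lam.im = 0 ∧ 0 < lam.re ∧ lam.re < 2) ∧
    (∀ (η : ℂ) (v : Fin n → ℂ), v ≠ 0 →
      ((1 - Matrix.diagonal μ * B).map (Complex.ofReal ·)).mulVec v = η • v →
      ‖η‖ < 1) :=
  stmt6_general B hB μ hμ
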